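/- For the nonclassical-type representations, if Re(r) > 0, Re(r') > 0 and (ε, ε̃, r) ≠ (ε', ε̃', r'), then the representations R_r^{ε,ε̃} and R_{r'}^{ε',ε̃'} of U_q(iso_2) are not equivalent; moreover R_r^{ε,ε̃} and R_{r'}^{ε',-ε̃} with r' = -r are equivalent. -/
import Mathlib


noncomputable section

/-- The basis vector |j⟩, j ∈ ℕ. -/
def eN (j : ℕ) : ℕ →₀ ℂ := Finsupp.single j 1

/-- A linear operator on the space with basis {|j⟩ : j ∈ ℕ}, given by its values on
the basis vectors. -/
def opN (f : ℕ → (ℕ →₀ ℂ)) : (ℕ →₀ ℂ) →ₗ[ℂ] (ℕ →₀ ℂ) :=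
  Finsupp.lift _ _ _ f


/-- R(I)|j⟩ = -ε(q^{j+1/2} + q^{-j-1/2})/(q-q⁻¹)|j⟩, with sq = q^{1/2}. -/
def SI (q sq ε : ℂ) : (ℕ →₀ ℂ) →ₗ[ℂ] (ℕ →₀ ℂ) :=
  opN fun j => (-(ε * (q ^ j * sq + (q ^ j * sq)⁻¹) / (q - q⁻¹))) • eN j

/-- R(T2)|0⟩ = -(r/(q^{1/2}-q^{-1/2}))(ε̃|0⟩ + i|1⟩) and
R(T2)|j⟩ = -εir/(q^{j+1/2}-q^{-j-1/2})(|j+1⟩ + |j-1⟩) for j ≥ 1. -/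
def ST2 (q sq r ε te : ℂ) : (ℕ →₀ ℂ) →ₗ[ℂ] (ℕ →₀ ℂ) :=
  opN fun j =>
    match j with
    | 0 => (-(r / (sq - sq⁻¹))) • (te • eN 0 + Complex.I • eN 1)
    | j + 1 => (-(ε * Complex.I * r / (q ^ (j + 1) * sq - (q ^ (j + 1) * sq)⁻¹))) •
        (eN (j + 2) + eN j)

/-- R(T1)|0⟩ = (r/(q^{1/2}-q^{-1/2}))(ε̃|0⟩ + iq|1⟩) and
R(T1)|j⟩ = (ir/(q^{j+1/2}-q^{-j-1/2}))(q^{j+1}|j+1⟩ + q^{-j}|j-1⟩) for j ≥ 1. -/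
def ST1 (q sq r te : ℂ) : (ℕ →₀ ℂ) →ₗ[ℂ] (ℕ →₀ ℂ) :=
  opN fun j =>
    match j with
    | 0 => (r / (sq - sq⁻¹)) • (te • eN 0 + (Complex.I * q) • eN 1)
    | j + 1 => (Complex.I * r / (q ^ (j + 1) * sq - (q ^ (j + 1) * sq)⁻¹)) •
        ((q ^ (j + 2) : ℂ) • eN (j + 2) + ((q : ℂ) ^ (j + 1))⁻¹ • eN j)

end


/-- Equivalence of the representations R_r^{ε,ε̃} and R_{r'}^{ε',ε̃'}: a linear
isomorphism of the representation space intertwining the actions of the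
generators I, T1, T2. -/
def EquivRep (q sq r ε te r' ε' te' : ℂ) : Prop :=
  ∃ A : (ℕ →₀ ℂ) ≃ₗ[ℂ] (ℕ →₀ ℂ),
    (∀ x, A (SI q sq ε x) = SI q sq ε' (A x)) ∧
    (∀ x, A (ST1 q sq r te x) = ST1 q sq r' te' (A x)) ∧
    (∀ x, A (ST2 q sq r ε te x) = ST2 q sq r' ε' te' (A x))


section Aux

lemma opN_single (f : ℕ → ℕ →₀ ℂ) (a : ℕ) (b : ℂ) :
    opN f (Finsupp.single a b) = b • f a := by
  simp [opN]

lemma opN_coeff (f : ℕ → ℕ →₀ ℂ) (y : ℕ →₀ ℂ) (k : ℕ) :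
    opN f y k = y.sum fun m c => c * f m k := by
  simp [opN, Finsupp.lift_apply, Finsupp.sum_apply]

lemma cancel_sum (d e a b : ℂ) (hd : d ≠ 0) (he : e ≠ 0)
    (h : -(e * a / d) = -(-e * b / d)) : a + b = 0 := by
  have h2 : (a + b) * (e / d) = 0 := by linear_combination -h
  rcases mul_eq_zero.mp h2 with h3 | h3
  · exact h3
  · exact absurd h3 (div_ne_zero he hd)

lemma cancel_eq (d e a b : ℂ) (hd : d ≠ 0) (he : e ≠ 0)
    (h : -(e * a / d) = -(e * b / d)) : a = b := by
  have h2 : (a - b) * (e / d) = 0 := by linear_combination -h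
  rcases mul_eq_zero.mp h2 with h3 | h3
  · exact sub_eq_zero.mp h3
  · exact absurd h3 (div_ne_zero he hd)

lemma cancel_div (d a b : ℂ) (hd : d ≠ 0) (h : a / d = b / d) : a = b := by
  have h2 : (a - b) * (1 / d) = 0 := by linear_combination h
  rcases mul_eq_zero.mp h2 with h3 | h3
  · exact sub_eq_zero.mp h3
  · exact absurd h3 (div_ne_zero one_ne_zero hd)

lemma auxInj (x y : ℝ) (hx0 : 0 < x) (hx1 : x < 1) (hy0 : 0 < y) (hy1 : y < 1)
    (h : x + x⁻¹ = y + y⁻¹) : x = y := by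
  have h2 : (x - y) * (x * y - 1) = 0 := by
    field_simp at h; nlinarith
  rcases mul_eq_zero.mp h2 with h3 | h3
  · linarith
  · nlinarith

noncomputable def P : (ℕ →₀ ℂ) →ₗ[ℂ] (ℕ →₀ ℂ) := opN fun j => ((-1 : ℂ) ^ j) • eN j

lemma P_single (a : ℕ) (b : ℂ) : P (Finsupp.single a b) = ((-1 : ℂ) ^ a * b) • eN a := by
  rw [P, opN_single, smul_smul]; ring_nf

lemma PP : P ∘ₗ P = LinearMap.id := by
  apply Finsupp.lhom_ext
  intro a b
  have h : ((-1 : ℂ) ^ a * b) • eN a = Finsupp.single a ((-1 : ℂ) ^ a * b) := by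
    simp [eN, Finsupp.smul_single]
  have h2 : (-1 : ℂ) ^ a * ((-1 : ℂ) ^ a * b) = b := by
    rw [← mul_assoc, ← mul_pow]; simp
  simp only [LinearMap.comp_apply, LinearMap.id_apply, P_single, h, h2]
  simp [eN, Finsupp.smul_single]

lemma P_e (a : ℕ) : P (eN a) = ((-1 : ℂ) ^ a) • eN a := by
  rw [eN, P, opN_single, one_smul]; rfl

lemma lhom_ext_e {f g : (ℕ →₀ ℂ) →ₗ[ℂ] (ℕ →₀ ℂ)} (h : ∀ a, f (eN a) = g (eN a)) : f = g := by
  apply Finsupp.lhom_ext; intro a b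
  have hs : (Finsupp.single a b : ℕ →₀ ℂ) = b • eN a := by simp [eN, Finsupp.smul_single]
  rw [hs, map_smul, map_smul, h]

lemma SI_e (q sq ε : ℂ) (j : ℕ) :
    SI q sq ε (eN j) = (-(ε * (q ^ j * sq + (q ^ j * sq)⁻¹) / (q - q⁻¹))) • eN j := by
  rw [SI, eN, opN_single, one_smul]; rfl

lemma SI_coeff (q sq ε : ℂ) (y : ℕ →₀ ℂ) (k : ℕ) :
    SI q sq ε y k = (-(ε * (q ^ k * sq + (q ^ k * sq)⁻¹) / (q - q⁻¹))) * y k := by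
  rw [SI, opN_coeff, Finsupp.sum, Finset.sum_eq_single k]
  · simp [eN, Finsupp.single_apply]; ring
  · intro b _ hb; simp [eN, Finsupp.single_apply, hb]
  · intro h; simp [Finsupp.notMem_support_iff.mp h]

lemma ST1_e0 (q sq r te : ℂ) :
    ST1 q sq r te (eN 0) = (r / (sq - sq⁻¹)) • (te • eN 0 + (Complex.I * q) • eN 1) := by
  rw [ST1, eN, opN_single, one_smul]

lemma ST1_es (q sq r te : ℂ) (j : ℕ) :
    ST1 q sq r te (eN (j + 1)) = (Complex.I * r / (q ^ (j + 1) * sq - (q ^ (j + 1) * sq)⁻¹)) •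
        ((q ^ (j + 2) : ℂ) • eN (j + 2) + ((q : ℂ) ^ (j + 1))⁻¹ • eN j) := by
  rw [ST1, show eN (j+1) = Finsupp.single (j+1) 1 from rfl, opN_single, one_smul]

lemma ST2_e0 (q sq r ε te : ℂ) :
    ST2 q sq r ε te (eN 0) = (-(r / (sq - sq⁻¹))) • (te • eN 0 + Complex.I • eN 1) := by
  rw [ST2, eN, opN_single, one_smul]

lemma ST2_es (q sq r ε te : ℂ) (j : ℕ) :
    ST2 q sq r ε te (eN (j + 1)) =
      (-(ε * Complex.I * r / (q ^ (j + 1) * sq - (q ^ (j + 1) * sq)⁻¹))) •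
        (eN (j + 2) + eN j) := by
  rw [ST2, show eN (j+1) = Finsupp.single (j+1) 1 from rfl, opN_single, one_smul]

lemma interSI (q sq ε : ℂ) : P ∘ₗ SI q sq ε = SI q sq ε ∘ₗ P := by
  apply lhom_ext_e; intro a
  simp only [LinearMap.comp_apply]
  rw [SI_e, map_smul, P_e, map_smul, SI_e, smul_smul, smul_smul, mul_comm]

lemma interST1 (q sq r te : ℂ) : P ∘ₗ ST1 q sq r te = ST1 q sq (-r) (-te) ∘ₗ P := by
  apply lhom_ext_e; intro a
  simp only [LinearMap.comp_apply]
  rcases a with _ | j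
  · rw [ST1_e0, map_smul, map_add, map_smul, map_smul, P_e, P_e, map_smul, ST1_e0]
    ext k
    simp only [eN, Finsupp.smul_apply, Finsupp.add_apply, Finsupp.single_apply, smul_eq_mul,
      pow_zero, pow_one]
    split_ifs <;> ring
  · rw [ST1_es, map_smul, map_add, map_smul, map_smul, P_e, P_e, P_e, map_smul, ST1_es]
    ext k
    simp only [eN, Finsupp.smul_apply, Finsupp.add_apply, Finsupp.single_apply, smul_eq_mul]
    split_ifs <;> ring

lemma interST2 (q sq r ε te : ℂ) : P ∘ₗ ST2 q sq r ε te = ST2 q sq (-r) ε (-te) ∘ₗ P := by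
  apply lhom_ext_e; intro a
  simp only [LinearMap.comp_apply]
  rcases a with _ | j
  · rw [ST2_e0, map_smul, map_add, map_smul, map_smul, P_e, P_e, map_smul, ST2_e0]
    ext k
    simp only [eN, Finsupp.smul_apply, Finsupp.add_apply, Finsupp.single_apply, smul_eq_mul,
      pow_zero, pow_one]
    split_ifs <;> ring
  · rw [ST2_es, map_smul, map_add, P_e, P_e, P_e, map_smul, ST2_es]
    ext k
    simp only [eN, Finsupp.smul_apply, Finsupp.add_apply, Finsupp.single_apply, smul_eq_mul]
    split_ifs <;> ring

end Aux

set_option maxHeartbeats 1000000 in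
/-- For 0 < q < 1 real, if Re r > 0, Re r' > 0 and
(ε,ε̃,r) ≠ (ε',ε̃',r'), then R_r^{ε,ε̃} and R_{r'}^{ε',ε̃'} are not equivalent;
moreover R_r^{ε,ε̃} and R_{-r}^{ε,-ε̃} are equivalent. -/
theorem stmt18 (qr : ℝ) (h0 : 0 < qr) (h1 : qr < 1)
    (q sq : ℂ) (hq : q = (qr : ℂ)) (hsq : sq = (Real.sqrt qr : ℂ))
    (r r' ε te ε' te' : ℂ)
    (hr : r ≠ 0) (hr' : r' ≠ 0)
    (hε : ε = 1 ∨ ε = -1) (hte : te = 1 ∨ te = -1)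
    (hε' : ε' = 1 ∨ ε' = -1) (hte' : te' = 1 ∨ te' = -1) :
    (r.re > 0 → r'.re > 0 → (ε, te, r) ≠ (ε', te', r') →
      ¬ EquivRep q sq r ε te r' ε' te') ∧
    EquivRep q sq r ε te (-r) ε (-te) := by
  classical
  -- basic numeric facts
  set s : ℝ := Real.sqrt qr with hsdef
  have hs0 : 0 < s := Real.sqrt_pos.mpr h0
  have hs1 : s < 1 := by nlinarith [Real.sq_sqrt h0.le, Real.sqrt_nonneg qr]
  have hx0 : ∀ j : ℕ, 0 < qr ^ j * s := fun j => mul_pos (pow_pos h0 j) hs0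
  have hx1 : ∀ j : ℕ, qr ^ j * s < 1 := by
    intro j
    have hp : qr ^ j ≤ 1 := pow_le_one₀ h0.le h1.le
    nlinarith [hx0 j]
  have hcast : ∀ j : ℕ, q ^ j * sq = ((qr ^ j * s : ℝ) : ℂ) := by
    intro j; rw [hq, hsq]; push_cast; ring
  have hN : ∀ j : ℕ, q ^ j * sq + (q ^ j * sq)⁻¹
      = ((qr ^ j * s + (qr ^ j * s)⁻¹ : ℝ) : ℂ) := by
    intro j; rw [hcast]; push_cast; ring
  have hdq : q - q⁻¹ ≠ 0 := by
    rw [hq, ← Complex.ofReal_inv, ← Complex.ofReal_sub]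
    simp only [ne_eq, Complex.ofReal_eq_zero]
    have hq1 : qr * qr⁻¹ = 1 := mul_inv_cancel₀ h0.ne'
    intro hcon; nlinarith
  have hds : sq - sq⁻¹ ≠ 0 := by
    rw [hsq, ← Complex.ofReal_inv, ← Complex.ofReal_sub]
    simp only [ne_eq, Complex.ofReal_eq_zero]
    have hq1 : s * s⁻¹ = 1 := mul_inv_cancel₀ hs0.ne'
    intro hcon; nlinarith
  have hε0 : ε ≠ 0 := by rcases hε with h | h <;> rw [h] <;> norm_num
  have hNne : ∀ j k : ℕ, j ≠ k →
      (qr ^ j * s + (qr ^ j * s)⁻¹) ≠ (qr ^ k * s + (qr ^ k * s)⁻¹) := by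
    intro j k hjk hcon
    have heq := auxInj _ _ (hx0 j) (hx1 j) (hx0 k) (hx1 k) hcon
    have hp : qr ^ j = qr ^ k := mul_right_cancel₀ hs0.ne' heq
    rcases lt_trichotomy j k with hlt | hlt | hlt
    · have := pow_lt_pow_right_of_lt_one₀ h0 h1 hlt
      rw [hp] at this; exact lt_irrefl _ this
    · exact hjk hlt
    · have := pow_lt_pow_right_of_lt_one₀ h0 h1 hlt
      rw [hp] at this; exact lt_irrefl _ this
  constructor
  · intro hre hre' hne hEq
    obtain ⟨A, hI, hT1, hT2⟩ := hEq
    have key : ∀ j k : ℕ,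
        (-(ε * (q ^ j * sq + (q ^ j * sq)⁻¹) / (q - q⁻¹)) ≠
          -(ε' * (q ^ k * sq + (q ^ k * sq)⁻¹) / (q - q⁻¹))) → (A (eN j)) k = 0 := by
      intro j k hlk
      have h := hI (eN j)
      rw [SI_e, map_smul] at h
      have h2 := DFunLike.congr_fun h k
      rw [SI_coeff] at h2
      rw [Finsupp.smul_apply, smul_eq_mul] at h2
      by_contra hy
      exact hlk (mul_right_cancel₀ hy h2)
    have hAinj : Function.Injective A := A.injective
    have heNne : ∀ j : ℕ, eN j ≠ (0 : ℕ →₀ ℂ) := by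
      intro j hcon
      have := DFunLike.congr_fun hcon j
      simp [eN] at this
    -- ε = ε'
    have hee : ε = ε' := by
      by_contra hcon
      have he' : ε' = -ε := by
        rcases hε with h | h <;> rcases hε' with h' | h' <;>
          simp [h, h'] at hcon ⊢
      have hy : A (eN 0) = 0 := by
        ext k
        rw [Finsupp.coe_zero, Pi.zero_apply]
        apply key 0 k
        rw [he', hN 0, hN k]
        intro hc
        have hc2 := cancel_sum _ _ _ _ hdq hε0 hc
        rw [← Complex.ofReal_add, Complex.ofReal_eq_zero] at hc2
        nlinarith [hx0 0, hx0 k, inv_pos.mpr (hx0 0), inv_pos.mpr (hx0 k)]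
      exact heNne 0 (hAinj (by rw [hy, map_zero]))
    -- diagonality
    have hdiag : ∀ j : ℕ, A (eN j) = ((A (eN j)) j) • eN j := by
      intro j
      ext k
      rw [Finsupp.smul_apply, smul_eq_mul]
      by_cases hk : k = j
      · subst hk; simp [eN, Finsupp.single_apply]
      · rw [show (eN j) k = 0 by simp [eN, Finsupp.single_apply, Ne.symm hk], mul_zero]
        apply key j k
        rw [← hee, hN j, hN k]
        intro hc
        have hc2 := cancel_eq _ _ _ _ hdq hε0 hc
        rw [Complex.ofReal_inj] at hc2
        exact hNne j k (fun h => hk (h.symm)) hc2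
    set a0 : ℂ := (A (eN 0)) 0 with ha0def
    set a1 : ℂ := (A (eN 1)) 1 with ha1def
    have ha0 : a0 ≠ 0 := by
      intro hcon
      have : A (eN 0) = 0 := by rw [hdiag 0, ← ha0def, hcon, zero_smul]
      exact heNne 0 (hAinj (by rw [this, map_zero]))
    -- use T2 on |0⟩
    have h := hT2 (eN 0)
    rw [ST2_e0, map_smul, map_add, map_smul, map_smul, hdiag 0, hdiag 1, ← ha0def, ← ha1def,
      map_smul, ST2_e0] at h
    have h4 := DFunLike.congr_fun h 0
    simp only [Finsupp.smul_apply, Finsupp.add_apply, smul_eq_mul, eN,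
      Finsupp.single_apply] at h4
    norm_num at h4
    -- h4 : -(r/ds) * (te * a0) = a0 * (-(r'/ds) * te')  (roughly)
    have h5 : r * te = r' * te' := by
      have h6 : (r * te - r' * te') * (a0 / (sq - sq⁻¹)) = 0 := by linear_combination h4
      rcases mul_eq_zero.mp h6 with h7 | h7
      · exact sub_eq_zero.mp h7
      · exact absurd h7 (div_ne_zero ha0 hds)
    rcases hte with ht | ht <;> rcases hte' with ht' | ht' <;> rw [ht, ht'] at h5
    · apply hne
      rw [hee, ht, ht']
      rw [mul_one, mul_one] at h5
      rw [h5]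
    · rw [mul_one, mul_neg_one] at h5
      have hre2 : r.re = -r'.re := by rw [h5]; simp
      linarith
    · rw [mul_neg_one, mul_one] at h5
      have hre2 : r.re = -r'.re := by
        have : r = -r' := by linear_combination -h5
        rw [this]; simp
      linarith
    · apply hne
      rw [hee, ht, ht']
      rw [mul_neg_one, mul_neg_one, neg_inj] at h5
      rw [h5]
  · refine ⟨LinearEquiv.ofLinear P P PP PP, ?_, ?_, ?_⟩
    · intro x; exact LinearMap.congr_fun (interSI q sq ε) x
    · intro x; exact LinearMap.congr_fun (interST1 q sq r te) x
    · intro x; exact LinearMap.congr_fun (interST2 q sq r ε te) x
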